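/- arXiv:math-ph/0010005 — 3 statements merged into one kernel-verified Lean document; each statement's English description precedes it below -/
import Mathlib

section
/- For every m ≥ 1 and x⊥ ∈ ℝ², the two-dimensional Laplacian of |φ_m|² satisfies (2B)^{-1} Δ |φ_m(x⊥)|² = m |φ_{m-1}(x⊥)|² + (m+1) |φ_{m+1}(x⊥)|² − (2m+1) |φ_m(x⊥)|². -/
/-!
Write `|φ_m(x)|² = (B/2π) w_m(B|x|²/2)` with the Poisson weight `w_m(u) = u^m e^{-u}/m!`.
In the plane, a radial function `g(c|x|²)` has Laplacian `4c (u g''(u) + g'(u)) = 4c (u g')'`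
at `u = c|x|²`. From `w_m' = w_{m-1} - w_m` and `u w_m = (m+1) w_{m+1}` one gets
`u w_m' = m w_m - (m+1) w_{m+1}`, and differentiating once more gives the three-term recurrence.
-/

open MeasureTheory Real

/-- `|φ_m(x⊥)|² = (B/(2π)) (B|x⊥|²/2)^m / m! · e^{-B|x⊥|²/2}`. -/
noncomputable def phiSq (B : ℝ) (m : ℕ) (x : EuclideanSpace ℝ (Fin 2)) : ℝ :=
  (B / (2 * π)) * (B * ‖x‖ ^ 2 / 2) ^ m / (Nat.factorial m) * Real.exp (-B * ‖x‖ ^ 2 / 2)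

/-- The two-dimensional Laplacian: the sum of the second derivatives along the
two coordinate directions. -/
noncomputable def laplacian2 (f : EuclideanSpace ℝ (Fin 2) → ℝ)
    (x : EuclideanSpace ℝ (Fin 2)) : ℝ :=
  ∑ i : Fin 2, iteratedDeriv 2 (fun t : ℝ => f (x + t • EuclideanSpace.single i (1 : ℝ))) 0

open scoped RealInnerProductSpace Nat

section RadialLaplacian

variable {g g' : ℝ → ℝ} {g'' c : ℝ}

theorem iteratedDeriv_two_comp_mul_normSq_line {E : Type*} [NormedAddCommGroup E]
    [InnerProductSpace ℝ E] (x v : E) (hg : ∀ u, HasDerivAt g (g' u) u)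
    (hg' : HasDerivAt g' g'' (c * ‖x‖ ^ 2)) :
    iteratedDeriv 2 (fun t : ℝ => g (c * ‖x + t • v‖ ^ 2)) 0 =
      (2 * c * ⟪x, v⟫) ^ 2 * g'' + 2 * c * ‖v‖ ^ 2 * g' (c * ‖x‖ ^ 2) := by
  have hline : ∀ t : ℝ, HasDerivAt (fun t : ℝ => x + t • v) v t := fun t =>
    ((hasDerivAt_id t).smul_const v).const_add x |>.congr_deriv (one_smul ℝ v)
  have hq : ∀ t : ℝ,
      HasDerivAt (fun t : ℝ => c * ‖x + t • v‖ ^ 2) (c * (2 * ⟪x + t • v, v⟫)) t :=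
    fun t => (hline t).norm_sq.const_mul c
  have hderiv : deriv (fun t : ℝ => g (c * ‖x + t • v‖ ^ 2)) =
      fun t => g' (c * ‖x + t • v‖ ^ 2) * (c * (2 * ⟪x + t • v, v⟫)) :=
    funext fun t => ((hg _).comp t (hq t)).deriv
  have hq' : HasDerivAt (fun t : ℝ => c * (2 * ⟪x + t • v, v⟫)) (c * (2 * ‖v‖ ^ 2)) 0 := by
    simpa [real_inner_self_eq_norm_sq] using
      (((hline 0).inner ℝ (hasDerivAt_const (0 : ℝ) v)).const_mul 2).const_mul c
  have hg'q : HasDerivAt (fun t : ℝ => g' (c * ‖x + t • v‖ ^ 2))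
      (g'' * (c * (2 * ⟪x + (0 : ℝ) • v, v⟫))) 0 :=
    hg'.comp_of_eq 0 (hq 0) (by simp)
  rw [iteratedDeriv_succ, iteratedDeriv_one, hderiv]
  refine (hg'q.mul hq').deriv.trans ?_
  simp only [zero_smul, add_zero]
  ring

theorem laplacian2_comp_mul_normSq (x : EuclideanSpace ℝ (Fin 2))
    (hg : ∀ u, HasDerivAt g (g' u) u) (hg' : HasDerivAt g' g'' (c * ‖x‖ ^ 2)) :
    laplacian2 (fun y => g (c * ‖y‖ ^ 2)) x =
      4 * c * (c * ‖x‖ ^ 2 * g'' + g' (c * ‖x‖ ^ 2)) := by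
  simp only [laplacian2, iteratedDeriv_two_comp_mul_normSq_line x _ hg hg',
    EuclideanSpace.inner_single_right, PiLp.norm_single, Fin.sum_univ_two]
  rw [EuclideanSpace.real_norm_sq_eq x, Fin.sum_univ_two]
  simp only [ringHom_apply, one_mul, norm_one, one_pow, mul_one]
  ring

end RadialLaplacian

noncomputable def poissonWeight (k : ℕ) (u : ℝ) : ℝ := u ^ k / k ! * exp (-u)

theorem mul_poissonWeight (k : ℕ) (u : ℝ) :
    u * poissonWeight k u = (k + 1) * poissonWeight (k + 1) u := by
  simp only [poissonWeight, Nat.factorial_succ, Nat.cast_mul, pow_succ]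
  field_simp
  push_cast
  ring

theorem differentiable_poissonWeight (k : ℕ) : Differentiable ℝ (poissonWeight k) := by
  unfold poissonWeight
  fun_prop

theorem hasDerivAt_poissonWeight_zero (u : ℝ) :
    HasDerivAt (poissonWeight 0) (-poissonWeight 0 u) u := by
  have h0 : poissonWeight 0 = fun u => exp (-u) := funext fun u => by simp [poissonWeight]
  rw [h0]
  simpa using (hasDerivAt_neg u).exp

theorem hasDerivAt_poissonWeight_succ (k : ℕ) (u : ℝ) :
    HasDerivAt (poissonWeight (k + 1)) (poissonWeight k u - poissonWeight (k + 1) u) u := by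
  refine (((hasDerivAt_pow (k + 1) u).div_const ((k + 1)! : ℝ)).mul
    (hasDerivAt_neg u).exp).congr_deriv ?_
  simp only [poissonWeight, Nat.factorial_succ, Nat.cast_mul, Nat.add_sub_cancel]
  field_simp
  push_cast
  ring

theorem mul_deriv_poissonWeight (m : ℕ) (u : ℝ) :
    u * deriv (poissonWeight m) u = m * poissonWeight m u - (m + 1) * poissonWeight (m + 1) u := by
  cases m with
  | zero => simp [(hasDerivAt_poissonWeight_zero u).deriv, mul_poissonWeight 0 u]
  | succ k =>
    rw [(hasDerivAt_poissonWeight_succ k u).deriv, mul_sub, mul_poissonWeight, mul_poissonWeight]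
    push_cast
    ring

-- At `m = 0` both sides vanish, so the truncated `m - 1` does no harm.
theorem natCast_mul_deriv_poissonWeight (m : ℕ) (u : ℝ) :
    m * deriv (poissonWeight m) u = m * (poissonWeight (m - 1) u - poissonWeight m u) := by
  cases m with
  | zero => simp
  | succ k => rw [(hasDerivAt_poissonWeight_succ k u).deriv, Nat.add_sub_cancel]

theorem differentiable_deriv_poissonWeight (m : ℕ) :
    Differentiable ℝ (deriv (poissonWeight m)) := by
  cases m with
  | zero =>
    rw [funext fun u => (hasDerivAt_poissonWeight_zero u).deriv]
    exact (differentiable_poissonWeight 0).neg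
  | succ k =>
    rw [funext fun u => (hasDerivAt_poissonWeight_succ k u).deriv]
    exact (differentiable_poissonWeight k).sub (differentiable_poissonWeight (k + 1))

theorem mul_deriv_deriv_add_deriv_poissonWeight (m : ℕ) (u : ℝ) :
    u * deriv (deriv (poissonWeight m)) u + deriv (poissonWeight m) u =
      m * poissonWeight (m - 1) u + (m + 1) * poissonWeight (m + 1) u
        - (2 * m + 1) * poissonWeight m u := by
  have hproduct : HasDerivAt (fun u => u * deriv (poissonWeight m) u)
      (1 * deriv (poissonWeight m) u + u * deriv (deriv (poissonWeight m)) u) u :=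
    (hasDerivAt_id u).mul (differentiable_deriv_poissonWeight m u).hasDerivAt
  have hweights : HasDerivAt (fun u => u * deriv (poissonWeight m) u)
      (m * deriv (poissonWeight m) u - (m + 1) * deriv (poissonWeight (m + 1)) u) u := by
    rw [funext (mul_deriv_poissonWeight m)]
    exact ((differentiable_poissonWeight m u).hasDerivAt.const_mul _).sub
      ((differentiable_poissonWeight (m + 1) u).hasDerivAt.const_mul _)
  have h := hproduct.unique hweights
  rw [natCast_mul_deriv_poissonWeight, (hasDerivAt_poissonWeight_succ m u).deriv] at h
  linarith

theorem phiSq_eq_poissonWeight (B : ℝ) (m : ℕ) :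
    phiSq B m = fun y => B / (2 * π) * poissonWeight m (B / 2 * ‖y‖ ^ 2) := by
  funext y
  simp only [phiSq, poissonWeight]
  ring_nf

theorem laplacian_phiSq_general (B : ℝ) (hB : 0 < B) (m : ℕ)
    (x : EuclideanSpace ℝ (Fin 2)) :
    (2 * B)⁻¹ * laplacian2 (phiSq B m) x =
      (m : ℝ) * phiSq B (m - 1) x + ((m : ℝ) + 1) * phiSq B (m + 1) x -
        (2 * (m : ℝ) + 1) * phiSq B m x := by
  set K := B / (2 * π)
  set u := B / 2 * ‖x‖ ^ 2
  have hΔ := laplacian2_comp_mul_normSq (c := B / 2) x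
    (fun s => (differentiable_poissonWeight m s).hasDerivAt.const_mul K)
    ((differentiable_deriv_poissonWeight m u).hasDerivAt.const_mul K)
  have hscale : (2 * B)⁻¹ * (4 * (B / 2)) = 1 := by
    field_simp [hB.ne']
    ring
  simp only [phiSq_eq_poissonWeight] at hΔ ⊢
  rw [hΔ]
  linear_combination K * mul_deriv_deriv_add_deriv_poissonWeight m u +
    K * (u * deriv (deriv (poissonWeight m)) u + deriv (poissonWeight m) u) * hscale

/-- for `m ≥ 1`,
`(2B)⁻¹ Δ|φ_m|² = m|φ_{m-1}|² + (m+1)|φ_{m+1}|² − (2m+1)|φ_m|²`. -/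
theorem laplacian_phiSq (B : ℝ) (hB : 0 < B) (m : ℕ) (hm : 1 ≤ m)
    (x : EuclideanSpace ℝ (Fin 2)) :
    (2 * B)⁻¹ * laplacian2 (phiSq B m) x =
      (m : ℝ) * phiSq B (m - 1) x + ((m : ℝ) + 1) * phiSq B (m + 1) x -
        (2 * (m : ℝ) + 1) * phiSq B m x :=
  laplacian_phiSq_general B hB m x
end

section
/- For every m ≥ 0, ∫_{ℝ²} |φ_m(x⊥)|² |x⊥|^{-1} dx⊥ ≤ sqrt(π/2) · B^{1/2} / (m+1)^{1/2}. -/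
/-!
In polar coordinates the weight `|x|⁻¹` cancels the Jacobian `r`, and the substitution
`t = B r² / 2` turns the integral into `√(B/2) · Γ(m + 1/2) / m!`. The bound
`Γ(m + 1/2) √(m + 1) ≤ √π · m!` then follows by induction from `Γ(1/2) = √π`, the inductive
step being `(m + 1/2)² (m + 2) ≤ (m + 1)³`.
-/

open MeasureTheory Real

open Set

lemma integral_fun_norm_euclideanSpace_fin_two {F : Type*} [NormedAddCommGroup F]
    [NormedSpace ℝ F] (f : ℝ → F) :
    ∫ x : EuclideanSpace ℝ (Fin 2), f ‖x‖ = (2 * π) • ∫ r in Ioi 0, r • f r := by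
  rw [integral_fun_norm_addHaar volume f]
  simp [Measure.real, pi_nonneg, mul_smul, ofNat_smul_eq_nsmul]

lemma integral_pow_mul_exp_neg_mul_sq (m : ℕ) {b : ℝ} (hb : 0 < b) :
    ∫ r in Ioi (0 : ℝ), r ^ (2 * m) * exp (-b * r ^ 2) =
      Gamma (m + 1 / 2) / (2 * b ^ ((m : ℝ) + 1 / 2)) := by
  have h := integral_rpow_mul_exp_neg_mul_rpow two_pos
    (by linarith [(Nat.cast_nonneg (2 * m) : (0 : ℝ) ≤ _)] : (-1 : ℝ) < (2 * m : ℕ)) hb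
  simp only [rpow_natCast, rpow_two] at h
  rw [h, show (-((2 * m : ℕ) + 1) / 2 : ℝ) = -((m : ℝ) + 1 / 2) by push_cast; ring,
    show (((2 * m : ℕ) : ℝ) + 1) / 2 = (m : ℝ) + 1 / 2 by push_cast; ring, rpow_neg hb.le]
  ring

lemma add_half_mul_sqrt_add_two_le {x : ℝ} (hx : 0 ≤ x) :
    (x + 1 / 2) * √(x + 2) ≤ (x + 1) * √(x + 1) := by
  rw [← pow_le_pow_iff_left₀ (by positivity) (by positivity) two_ne_zero, mul_pow, mul_pow,
    sq_sqrt (by positivity), sq_sqrt (by positivity)]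
  nlinarith [sq_nonneg x]

lemma Gamma_nat_add_half_mul_sqrt_le (m : ℕ) :
    Gamma (m + 1 / 2) * √(m + 1) ≤ √π * m.factorial := by
  induction m with
  | zero => simp [-one_div, Gamma_one_half_eq]
  | succ n ih =>
    have hΓ : 0 < Gamma (n + 1 / 2) := Gamma_pos_of_pos (by positivity)
    calc Gamma ((n + 1 : ℕ) + 1 / 2) * √((n + 1 : ℕ) + 1)
        = Gamma (n + 1 / 2) * ((n + 1 / 2) * √(n + 2)) := by
          rw [show ((n + 1 : ℕ) : ℝ) + 1 / 2 = n + 1 / 2 + 1 by push_cast; ring,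
            Gamma_add_one (by positivity)]
          push_cast; ring_nf
      _ ≤ Gamma (n + 1 / 2) * ((n + 1) * √(n + 1)) :=
          mul_le_mul_of_nonneg_left (add_half_mul_sqrt_add_two_le n.cast_nonneg) hΓ.le
      _ = (n + 1) * (Gamma (n + 1 / 2) * √(n + 1)) := by ring
      _ ≤ (n + 1) * (√π * n.factorial) := by gcongr
      _ = √π * (n + 1).factorial := by push_cast [Nat.factorial_succ]; ring

lemma integral_phiSq_mul_inv_norm {B : ℝ} (hB : 0 < B) (m : ℕ) :
    ∫ x : EuclideanSpace ℝ (Fin 2), phiSq B m x * ‖x‖⁻¹ =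
      √(B / 2) * Gamma (m + 1 / 2) / m.factorial := by
  have hB2 : 0 < B / 2 := by positivity
  have radial : ∀ r ∈ Ioi (0 : ℝ),
      r • ((B / (2 * π)) * (B * r ^ 2 / 2) ^ m / m.factorial * exp (-B * r ^ 2 / 2) * r⁻¹) =
        B / (2 * π) * (B / 2) ^ m / m.factorial * (r ^ (2 * m) * exp (-(B / 2) * r ^ 2)) := by
    intro r (hr : 0 < r)
    rw [smul_eq_mul, pow_mul, show -B * r ^ 2 / 2 = -(B / 2) * r ^ 2 by ring]
    field_simp
    rw [← mul_pow]
    ring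
  calc ∫ x : EuclideanSpace ℝ (Fin 2), phiSq B m x * ‖x‖⁻¹
      = 2 * π * (B / (2 * π) * (B / 2) ^ m / m.factorial *
          ∫ r in Ioi (0 : ℝ), r ^ (2 * m) * exp (-(B / 2) * r ^ 2)) := by
        rw [← integral_const_mul, ← setIntegral_congr_fun measurableSet_Ioi radial]
        exact integral_fun_norm_euclideanSpace_fin_two fun r =>
          (B / (2 * π)) * (B * r ^ 2 / 2) ^ m / m.factorial * exp (-B * r ^ 2 / 2) * r⁻¹
    _ = √(B / 2) * Gamma (m + 1 / 2) / m.factorial := by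
        rw [integral_pow_mul_exp_neg_mul_sq m hB2, rpow_add hB2, rpow_natCast,
          ← sqrt_eq_rpow]
        field_simp
        rw [sq_sqrt hB2.le]
        ring

/-- `∫ |φ_m|² |x⊥|⁻¹ dx⊥ ≤ √(π/2) · B^{1/2} / (m+1)^{1/2}`. -/
theorem integral_phiSq_inv_norm (B : ℝ) (hB : 0 < B) (m : ℕ) :
    ∫ x : EuclideanSpace ℝ (Fin 2), phiSq B m x * ‖x‖⁻¹ ≤
      Real.sqrt (π / 2) * Real.sqrt B / Real.sqrt ((m : ℝ) + 1) := by
  have hGamma : Gamma (m + 1 / 2) / m.factorial ≤ √π / √(m + 1) := by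
    rw [div_le_div_iff₀ (by positivity) (by positivity)]
    exact Gamma_nat_add_half_mul_sqrt_le m
  calc ∫ x : EuclideanSpace ℝ (Fin 2), phiSq B m x * ‖x‖⁻¹
      = √(B / 2) * (Gamma (m + 1 / 2) / m.factorial) := by
        rw [integral_phiSq_mul_inv_norm hB, mul_div_assoc]
    _ ≤ √(B / 2) * (√π / √(m + 1)) := by gcongr
    _ = √(π / 2) * √B / √(m + 1) := by
        rw [sqrt_div hB.le, sqrt_div pi_pos.le]
        ring
end

section
/- Let h = −d²/dz² − Φ(z) be a one-dimensional Schrödinger operator on L²(ℝ) with Φ even (reflection symmetric), Φ(z) ≤ Z/|z| for all z ≠ 0, and suppose h has at least two eigenvalues below the essential spectrum. Then the second lowest eigenvalue μ² of h satisfies μ² ≥ −Z²/4. -/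
/-!
Suppose `μ₁ < μ₂ < -Z²/4`. A bound state `u` with eigenvalue `μ < -Z²/4` cannot vanish at a point
`a ≥ 0` unless it vanishes on all of `(a, ∞)`: with `g x = 1/(x - a) - Z/2`, the function
`F = u u' - g u²` is nondecreasing on `(a, ∞)` (this is the Hardy-type bound
`-d² - Z/(x - a) ≥ -Z²/4` on the half-line) and tends to `0` at both ends, so `F' = 0`, which
forces `u = 0`. Reflecting gives the same on the left of any zero `a ≤ 0`. Hence `u 0 ≠ 0` and `u`
has constant sign. Two eigenfunctions of constant sign cannot have different eigenvalues: their
Wronskian is monotone and vanishes at `±∞`, because far out `u'' = q u` with `q ≥ 0`, which makes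
`u u'` nondecreasing, hence `≤ 0` by square integrability, and then `u → 0` and `u'²` decreases.
So the Wronskian vanishes identically, while its derivative `(μ₂ - μ₁) u₁ u₂` does not at `0`.
-/

open MeasureTheory Filter Set Topology

lemma monotoneOn_of_hasDerivAt_nonneg {D : Set ℝ} (hD : Convex ℝ D) {f f' : ℝ → ℝ}
    (hf : ∀ x ∈ D, HasDerivAt f (f' x) x) (hf' : ∀ x ∈ interior D, 0 ≤ f' x) :
    MonotoneOn f D :=
  monotoneOn_of_hasDerivWithinAt_nonneg hD
    (fun x hx => (hf x hx).continuousAt.continuousWithinAt)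
    (fun x hx => (hf x (interior_subset hx)).hasDerivWithinAt) hf'

lemma antitoneOn_of_hasDerivAt_nonpos {D : Set ℝ} (hD : Convex ℝ D) {f f' : ℝ → ℝ}
    (hf : ∀ x ∈ D, HasDerivAt f (f' x) x) (hf' : ∀ x ∈ interior D, f' x ≤ 0) :
    AntitoneOn f D :=
  antitoneOn_of_hasDerivWithinAt_nonpos hD
    (fun x hx => (hf x hx).continuousAt.continuousWithinAt)
    (fun x hx => (hf x (interior_subset hx)).hasDerivWithinAt) hf'

lemma hasDerivAt_sq {u : ℝ → ℝ} {x : ℝ} (hu : DifferentiableAt ℝ u x) :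
    HasDerivAt (fun z => u z ^ 2) (2 * u x * deriv u x) x := by
  simpa [mul_comm, mul_left_comm] using hu.hasDerivAt.fun_pow 2

lemma MonotoneOn.eq_of_tendsto {α β : Type*} [Preorder α] [TopologicalSpace β] [PartialOrder β]
    [OrderClosedTopology β] {f : α → β} {s : Set α} {l₁ l₂ : Filter α} [l₁.NeBot] [l₂.NeBot]
    {x : α} {c : β} (hf : MonotoneOn f s) (hx : x ∈ s)
    (h₁ : Tendsto f l₁ (𝓝 c)) (h₂ : Tendsto f l₂ (𝓝 c))
    (hl₁ : ∀ᶠ y in l₁, y ∈ s ∧ y ≤ x) (hl₂ : ∀ᶠ y in l₂, y ∈ s ∧ x ≤ y) : f x = c :=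
  le_antisymm (ge_of_tendsto h₂ (hl₂.mono fun _ hy => hf hx hy.1 hy.2))
    (le_of_tendsto h₁ (hl₁.mono fun _ hy => hf hy.1 hx hy.2))

lemma not_integrableOn_Ici_of_le {f : ℝ → ℝ} {c X : ℝ} (hc : 0 < c) (h : ∀ z ≥ X, c ≤ f z) :
    ¬ IntegrableOn f (Ici X) := by
  intro hf
  have hconst : IntegrableOn (fun _ => c) (Ici X) := by
    refine hf.mono' aestronglyMeasurable_const ?_
    filter_upwards [ae_restrict_mem measurableSet_Ici] with z hz
    rw [Real.norm_of_nonneg hc.le]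
    exact h z hz
  simp [hc.ne'] at hconst

lemma AntitoneOn.tendsto_atTop_zero_of_integrableOn {f : ℝ → ℝ} {R : ℝ}
    (hf : AntitoneOn f (Ici R)) (h0 : ∀ z ≥ R, 0 ≤ f z) (hL : IntegrableOn f (Ici R)) :
    Tendsto f atTop (𝓝 0) := by
  refine tendsto_order.2 ⟨fun a ha => ?_, fun ε hε => ?_⟩
  · filter_upwards [eventually_ge_atTop R] with z hz
    exact ha.trans_le (h0 z hz)
  · obtain ⟨z₀, hz₀, hfz₀⟩ : ∃ z ≥ R, f z < ε := by
      by_contra! h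
      exact not_integrableOn_Ici_of_le hε h hL
    filter_upwards [eventually_ge_atTop z₀] with z hz
    exact (hf hz₀ (hz₀.trans hz) hz).trans_lt hfz₀

section Decay

variable {u q : ℝ → ℝ} {R : ℝ} (hu : Differentiable ℝ u) (hu' : Differentiable ℝ (deriv u))
  (hL : IntegrableOn (fun z => u z ^ 2) (Ici R))
  (heq : ∀ z ≥ R, deriv (deriv u) z = q z * u z) (hq : ∀ z ≥ R, 0 ≤ q z)
include hu hu' hL heq hq

lemma mul_deriv_nonpos_of_deriv_deriv_eq : ∀ z ≥ R, u z * deriv u z ≤ 0 := by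
  intro z₀ hz₀
  by_contra! hc
  set c := u z₀ * deriv u z₀
  have hmono : MonotoneOn (fun z => u z * deriv u z) (Ici R) := by
    refine monotoneOn_of_hasDerivAt_nonneg (convex_Ici R)
      (fun z _ => (hu z).hasDerivAt.mul (hu' z).hasDerivAt) fun z hz => ?_
    rw [interior_Ici] at hz
    rw [heq z hz.le]
    nlinarith [hq z hz.le, sq_nonneg (u z), sq_nonneg (deriv u z)]
  have hgrow : MonotoneOn (fun z => u z ^ 2 - 2 * c * z) (Ici z₀) := by
    refine monotoneOn_of_hasDerivAt_nonneg (convex_Ici z₀)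
      (fun z _ => (hasDerivAt_sq (hu z)).sub ((hasDerivAt_id z).const_mul (2 * c)))
      fun z hz => ?_
    rw [interior_Ici] at hz
    have := hmono (mem_Ici.2 hz₀) (mem_Ici.2 (hz₀.trans hz.le)) hz.le
    simp only at this ⊢
    linarith
  refine not_integrableOn_Ici_of_le (X := z₀ + 1) (c := 2 * c) (by positivity) (fun z hz => ?_)
    (hL.mono_set (Ici_subset_Ici.2 (by linarith)))
  have := hgrow self_mem_Ici (mem_Ici.2 (by linarith : z₀ ≤ z)) (by linarith)
  simp only at this
  nlinarith [sq_nonneg (u z₀)]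

lemma tendsto_atTop_zero_of_deriv_deriv_eq : Tendsto u atTop (𝓝 0) := by
  have hanti : AntitoneOn (fun z => u z ^ 2) (Ici R) := by
    refine antitoneOn_of_hasDerivAt_nonpos (convex_Ici R) (fun z _ => hasDerivAt_sq (hu z))
      fun z hz => ?_
    rw [interior_Ici] at hz
    nlinarith [mul_deriv_nonpos_of_deriv_deriv_eq hu hu' hL heq hq z hz.le]
  have hsq := hanti.tendsto_atTop_zero_of_integrableOn (fun z _ => sq_nonneg _) hL
  rw [tendsto_zero_iff_abs_tendsto_zero]
  simpa [Function.comp_def, Real.sqrt_sq_eq_abs] using hsq.sqrt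

lemma deriv_sq_le_of_deriv_deriv_eq : ∀ z ≥ R, deriv u z ^ 2 ≤ deriv u R ^ 2 := by
  have hanti : AntitoneOn (fun z => deriv u z ^ 2) (Ici R) := by
    refine antitoneOn_of_hasDerivAt_nonpos (convex_Ici R) (fun z _ => hasDerivAt_sq (hu' z))
      fun z hz => ?_
    rw [interior_Ici] at hz
    rw [heq z hz.le]
    nlinarith [mul_nonneg (hq z hz.le)
      (neg_nonneg.2 (mul_deriv_nonpos_of_deriv_deriv_eq hu hu' hL heq hq z hz.le))]
  exact fun z hz => hanti self_mem_Ici (mem_Ici.2 hz) hz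

end Decay

lemma eqOn_zero_of_deriv_deriv_eq_of_hydrogen_lt {u q : ℝ → ℝ} {a Z : ℝ}
    (hu : Differentiable ℝ u) (hu' : Differentiable ℝ (deriv u))
    (heq : ∀ x > a, deriv (deriv u) x = q x * u x) (hq : ∀ x > a, Z ^ 2 / 4 - Z / (x - a) < q x)
    (hua : u a = 0) (hlim : Tendsto u atTop (𝓝 0))
    (hbdd : IsBoundedUnder (· ≤ ·) atTop ((‖·‖) ∘ deriv u)) : EqOn u 0 (Ioi a) := by
  -- `g = w'/w` for the half-line hydrogen ground state `w x = (x - a) * exp (-Z * (x - a) / 2)`;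
  -- the Riccati identity `g' + g² = Z²/4 - Z/(x - a)` gives the derivative of `F` below.
  set g : ℝ → ℝ := fun x => (x - a)⁻¹ - Z / 2
  set F : ℝ → ℝ := fun x => u x * deriv u x - g x * u x ^ 2
  set k : ℝ → ℝ := fun x => q x - (Z ^ 2 / 4 - Z / (x - a))
  have hF : ∀ x ∈ Ioi a, HasDerivAt F ((deriv u x - g x * u x) ^ 2 + k x * u x ^ 2) x := by
    intro x hx
    have hxa : x - a ≠ 0 := sub_ne_zero.2 (ne_of_gt hx)
    have hg : HasDerivAt g (-1 / (x - a) ^ 2) x := by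
      simpa [g] using (((hasDerivAt_id x).sub_const a).inv hxa).sub_const (Z / 2)
    refine (((hu x).hasDerivAt.mul (hu' x).hasDerivAt).sub
      (hg.mul (hasDerivAt_sq (hu x)))).congr_deriv ?_
    rw [heq x hx]
    simp only [g, k]
    field_simp
    ring
  have hmono : MonotoneOn F (Ioi a) := by
    refine monotoneOn_of_hasDerivAt_nonneg (convex_Ioi a) hF fun x hx => ?_
    rw [interior_Ioi] at hx
    exact add_nonneg (sq_nonneg _) (mul_nonneg (sub_pos.2 (hq x hx)).le (sq_nonneg _))
  have hright : Tendsto F (𝓝[>] a) (𝓝 0) := by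
    have hu₀ : Tendsto u (𝓝[>] a) (𝓝 0) :=
      hua ▸ (hu.continuous.tendsto a).mono_left nhdsWithin_le_nhds
    have hu'₀ : Tendsto (deriv u) (𝓝[>] a) (𝓝 (deriv u a)) :=
      (hu'.continuous.tendsto a).mono_left nhdsWithin_le_nhds
    have hslope : Tendsto (fun x => u x * (x - a)⁻¹) (𝓝[>] a) (𝓝 (deriv u a)) := by
      refine ((hu a).hasDerivAt.tendsto_slope.mono_left (nhdsGT_le_nhdsNE a)).congr fun x => ?_
      rw [slope_def_field, hua, sub_zero, div_eq_mul_inv]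
    have := (hu₀.mul hu'₀).sub ((hslope.mul hu₀).sub ((hu₀.pow 2).const_mul (Z / 2)))
    norm_num at this
    refine this.congr fun x => ?_
    simp only [F, g]
    ring
  have htop : Tendsto F atTop (𝓝 0) := by
    have hg : Tendsto g atTop (𝓝 (0 - Z / 2)) :=
      (tendsto_inv_atTop_zero.comp (tendsto_atTop_add_const_right _ (-a) tendsto_id)).sub_const _
    simpa using (hlim.zero_mul_isBoundedUnder_le hbdd).sub (hg.mul (hlim.pow 2))
  have hF0 : ∀ x ∈ Ioi a, F x = 0 := fun x hx =>
    hmono.eq_of_tendsto hx hright htop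
      (by filter_upwards [self_mem_nhdsWithin, Ioc_mem_nhdsGT hx] with y hy hy' using ⟨hy, hy'.2⟩)
      (by filter_upwards [eventually_ge_atTop x] with y hy using ⟨hx.trans_le hy, hy⟩)
  intro x hx
  have hF'0 : HasDerivAt F 0 x :=
    (hasDerivAt_const x (0 : ℝ)).congr_of_eventuallyEq
      (eventually_of_mem (Ioi_mem_nhds hx) hF0)
  have hsum := (hF x hx).unique hF'0
  have hk : 0 < k x := sub_pos.2 (hq x hx)
  have : k x * u x ^ 2 = 0 := by nlinarith [sq_nonneg (deriv u x - g x * u x), sq_nonneg (u x)]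
  simpa [hk.ne'] using this

lemma Continuous.apply_zero_ne_zero_and_mul_nonneg {u : ℝ → ℝ} (hu : Continuous u) (hne : u ≠ 0)
    (hvan : ∀ c x, u c = 0 → c ∈ uIcc 0 x → c ≠ x → u x = 0) :
    u 0 ≠ 0 ∧ ∀ x, 0 ≤ u 0 * u x := by
  have h0 : u 0 ≠ 0 := fun h0 => hne <| funext fun x => by
    rcases eq_or_ne 0 x with rfl | hx
    · exact h0
    · exact hvan 0 x h0 left_mem_uIcc hx
  refine ⟨h0, fun x => ?_⟩
  by_contra! hneg
  have hux : u x ≠ 0 := by rintro hx; simp [hx] at hneg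
  have hmem : (0 : ℝ) ∈ uIcc (u 0) (u x) := by
    rcases mul_neg_iff.1 hneg with h | h
    · exact mem_uIcc.2 (Or.inr ⟨h.2.le, h.1.le⟩)
    · exact mem_uIcc.2 (Or.inl ⟨h.1.le, h.2.le⟩)
  obtain ⟨c, hc, hc0⟩ := intermediate_value_uIcc hu.continuousOn hmem
  exact hux (hvan c x hc0 hc fun hcx => hux (hcx ▸ hc0))

structure IsBoundState (Φ : ℝ → ℝ) (μ : ℝ) (u : ℝ → ℝ) : Prop where
  contDiff : ContDiff ℝ 2 u
  integrable_sq : Integrable fun z => u z ^ 2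
  eigen_eq : ∀ z, -(deriv (deriv u) z) - Φ z * u z = μ * u z

namespace IsBoundState

variable {Φ u : ℝ → ℝ} {μ : ℝ}

lemma differentiable (h : IsBoundState Φ μ u) : Differentiable ℝ u :=
  h.contDiff.differentiable (by norm_num)

lemma differentiable_deriv (h : IsBoundState Φ μ u) : Differentiable ℝ (deriv u) :=
  (h.contDiff.iterate_deriv' 1 1).differentiable (by norm_num)

lemma deriv_deriv (h : IsBoundState Φ μ u) (z : ℝ) :
    deriv (deriv u) z = -(Φ z + μ) * u z := by
  linarith [h.eigen_eq z]

lemma comp_neg (h : IsBoundState Φ μ u) : IsBoundState (fun z => Φ (-z)) μ (fun z => u (-z)) where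
  contDiff := h.contDiff.comp contDiff_neg
  integrable_sq := h.integrable_sq.comp_neg
  eigen_eq z := by
    have hd : deriv (fun w => u (-w)) = fun w => -deriv u (-w) := funext fun w => deriv_comp_neg ..
    rw [hd, deriv.fun_neg, deriv_comp_neg, h.deriv_deriv]
    ring

lemma const_mul (h : IsBoundState Φ μ u) (c : ℝ) : IsBoundState Φ μ (fun z => c * u z) where
  contDiff := contDiff_const.mul h.contDiff
  integrable_sq := by simpa [mul_pow] using h.integrable_sq.const_mul (c ^ 2)
  eigen_eq z := by
    simp only [deriv_const_mul_field', h.deriv_deriv]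
    ring

variable {Z : ℝ}

lemma decay_atTop (h : IsBoundState Φ μ u) (hZ : 0 < Z) (hΦ : ∀ z, z ≠ 0 → Φ z ≤ Z / |z|)
    (hμ : μ < 0) :
    Tendsto u atTop (𝓝 0) ∧ IsBoundedUnder (· ≤ ·) atTop ((‖·‖) ∘ deriv u) := by
  set R := Z / -μ
  have hR : 0 < R := div_pos hZ (neg_pos.2 hμ)
  have hq : ∀ z ≥ R, 0 ≤ -(Φ z + μ) := fun z hz => by
    have hz0 : 0 < z := hR.trans_le hz
    have h1 : Φ z ≤ Z / z := by simpa [abs_of_pos hz0] using hΦ z hz0.ne'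
    have h2 : Z / z ≤ Z / R := div_le_div_of_nonneg_left hZ.le hR hz
    have h3 : Z / R = -μ := by simp only [R]; field_simp
    linarith
  have hL := h.integrable_sq.integrableOn (s := Ici R)
  have heq : ∀ z ≥ R, deriv (deriv u) z = -(Φ z + μ) * u z := fun z _ => h.deriv_deriv z
  refine ⟨tendsto_atTop_zero_of_deriv_deriv_eq h.differentiable h.differentiable_deriv hL heq hq,
    isBoundedUnder_of_eventually_le (a := |deriv u R|) ?_⟩
  filter_upwards [eventually_ge_atTop R] with z hz
  exact sq_le_sq.1 (deriv_sq_le_of_deriv_deriv_eq h.differentiable h.differentiable_deriv hL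
    heq hq z hz)

lemma decay_atBot (h : IsBoundState Φ μ u) (hZ : 0 < Z) (hΦ : ∀ z, z ≠ 0 → Φ z ≤ Z / |z|)
    (hμ : μ < 0) :
    Tendsto u atBot (𝓝 0) ∧ IsBoundedUnder (· ≤ ·) atBot ((‖·‖) ∘ deriv u) := by
  obtain ⟨hlim, hbdd⟩ := h.comp_neg.decay_atTop hZ
    (fun z hz => by simpa using hΦ (-z) (neg_ne_zero.2 hz)) hμ
  refine ⟨by simpa [Function.comp_def] using hlim.comp tendsto_neg_atBot_atTop, ?_⟩
  simpa [Function.comp_def, deriv_comp_neg] using tendsto_neg_atBot_atTop.isBoundedUnder_comp hbdd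

lemma eqOn_zero_Ioi (h : IsBoundState Φ μ u) (hZ : 0 < Z) (hΦ : ∀ z, z ≠ 0 → Φ z ≤ Z / |z|)
    (hμ : μ < -(Z ^ 2) / 4) {a : ℝ} (ha : 0 ≤ a) (hua : u a = 0) : EqOn u 0 (Ioi a) := by
  obtain ⟨hlim, hbdd⟩ := h.decay_atTop hZ hΦ (hμ.trans_le (by nlinarith))
  refine eqOn_zero_of_deriv_deriv_eq_of_hydrogen_lt (Z := Z) h.differentiable h.differentiable_deriv
    (fun x _ => h.deriv_deriv x) (fun x hx => ?_) hua hlim hbdd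
  have hx0 : 0 < x := ha.trans_lt hx
  have h1 : Φ x ≤ Z / x := by simpa [abs_of_pos hx0] using hΦ x hx0.ne'
  have h2 : Z / x ≤ Z / (x - a) := div_le_div_of_nonneg_left hZ.le (sub_pos.2 hx) (by linarith)
  linarith

lemma eqOn_zero_Iio (h : IsBoundState Φ μ u) (hZ : 0 < Z) (hΦ : ∀ z, z ≠ 0 → Φ z ≤ Z / |z|)
    (hμ : μ < -(Z ^ 2) / 4) {a : ℝ} (ha : a ≤ 0) (hua : u a = 0) : EqOn u 0 (Iio a) := by
  intro x hx
  simpa using h.comp_neg.eqOn_zero_Ioi hZ (fun z hz => by simpa using hΦ (-z) (neg_ne_zero.2 hz))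
    hμ (neg_nonneg.2 ha) (by simpa using hua) (mem_Ioi.2 (neg_lt_neg hx))

lemma apply_zero_ne_zero_and_mul_nonneg (h : IsBoundState Φ μ u) (hZ : 0 < Z)
    (hΦ : ∀ z, z ≠ 0 → Φ z ≤ Z / |z|) (hμ : μ < -(Z ^ 2) / 4) (hne : u ≠ 0) :
    u 0 ≠ 0 ∧ ∀ x, 0 ≤ u 0 * u x := by
  refine h.differentiable.continuous.apply_zero_ne_zero_and_mul_nonneg hne fun c x hc hcx hne => ?_
  rcases le_total 0 x with hx | hx
  · rw [uIcc_of_le hx] at hcx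
    exact h.eqOn_zero_Ioi hZ hΦ hμ hcx.1 hc (lt_of_le_of_ne hcx.2 hne)
  · rw [uIcc_of_ge hx] at hcx
    exact h.eqOn_zero_Iio hZ hΦ hμ hcx.2 hc (lt_of_le_of_ne hcx.1 hne.symm)

end IsBoundState

noncomputable def wronskian (u v : ℝ → ℝ) (x : ℝ) : ℝ := deriv u x * v x - u x * deriv v x

lemma tendsto_wronskian_zero {u v : ℝ → ℝ} {l : Filter ℝ} (hu : Tendsto u l (𝓝 0))
    (hu' : IsBoundedUnder (· ≤ ·) l ((‖·‖) ∘ deriv u)) (hv : Tendsto v l (𝓝 0))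
    (hv' : IsBoundedUnder (· ≤ ·) l ((‖·‖) ∘ deriv v)) : Tendsto (wronskian u v) l (𝓝 0) := by
  have := (isBoundedUnder_le_mul_tendsto_zero hu' hv).sub (hu.zero_mul_isBoundedUnder_le hv')
  rwa [sub_zero] at this

namespace IsBoundState

variable {Φ u₁ u₂ : ℝ → ℝ} {μ₁ μ₂ Z : ℝ}

lemma hasDerivAt_wronskian (h₁ : IsBoundState Φ μ₁ u₁) (h₂ : IsBoundState Φ μ₂ u₂) (x : ℝ) :
    HasDerivAt (wronskian u₁ u₂) ((μ₂ - μ₁) * (u₁ x * u₂ x)) x := by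
  refine (((h₁.differentiable_deriv x).hasDerivAt.mul (h₂.differentiable x).hasDerivAt).sub
    ((h₁.differentiable x).hasDerivAt.mul (h₂.differentiable_deriv x).hasDerivAt)).congr_deriv ?_
  rw [h₁.deriv_deriv, h₂.deriv_deriv]
  ring

lemma eq_of_nonneg (h₁ : IsBoundState Φ μ₁ u₁) (h₂ : IsBoundState Φ μ₂ u₂) (hZ : 0 < Z)
    (hΦ : ∀ z, z ≠ 0 → Φ z ≤ Z / |z|) (hμ : μ₁ ≤ μ₂) (hμ₂ : μ₂ < 0)
    (hu₁ : ∀ x, 0 ≤ u₁ x) (hu₂ : ∀ x, 0 ≤ u₂ x) {x₀ : ℝ} (hx₀ : u₁ x₀ * u₂ x₀ ≠ 0) :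
    μ₁ = μ₂ := by
  have hμ₁ : μ₁ < 0 := hμ.trans_lt hμ₂
  have hmono : Monotone (wronskian u₁ u₂) :=
    monotone_of_hasDerivAt_nonneg (h₁.hasDerivAt_wronskian h₂) fun x =>
      mul_nonneg (sub_nonneg.2 hμ) (mul_nonneg (hu₁ x) (hu₂ x))
  obtain ⟨hbot₁, hbot₁'⟩ := h₁.decay_atBot hZ hΦ hμ₁
  obtain ⟨hbot₂, hbot₂'⟩ := h₂.decay_atBot hZ hΦ hμ₂
  obtain ⟨htop₁, htop₁'⟩ := h₁.decay_atTop hZ hΦ hμ₁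
  obtain ⟨htop₂, htop₂'⟩ := h₂.decay_atTop hZ hΦ hμ₂
  have hW : wronskian u₁ u₂ = 0 := funext fun x =>
    (hmono.monotoneOn univ).eq_of_tendsto (mem_univ x)
      (tendsto_wronskian_zero hbot₁ hbot₁' hbot₂ hbot₂')
      (tendsto_wronskian_zero htop₁ htop₁' htop₂ htop₂')
      (by filter_upwards [eventually_le_atBot x] with y hy using ⟨mem_univ y, hy⟩)
      (by filter_upwards [eventually_ge_atTop x] with y hy using ⟨mem_univ y, hy⟩)
  have h0 := (h₁.hasDerivAt_wronskian h₂ x₀).unique (by rw [hW]; exact hasDerivAt_const x₀ (0 : ℝ))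
  simpa [hx₀, sub_eq_zero, eq_comm] using h0

end IsBoundState

theorem second_eigenvalue_lower_bound_general (Z : ℝ) (hZ : 0 < Z) (Φ : ℝ → ℝ)
    (hbound : ∀ z : ℝ, z ≠ 0 → Φ z ≤ Z / |z|)
    (μ₁ μ₂ : ℝ) (hμ : μ₁ < μ₂) (u₁ u₂ : ℝ → ℝ)
    (hu₁ : u₁ ≠ 0) (hu₂ : u₂ ≠ 0)
    (hsm₁ : ContDiff ℝ 2 u₁) (hsm₂ : ContDiff ℝ 2 u₂)
    (hL₁ : Integrable fun z => (u₁ z) ^ 2) (hL₂ : Integrable fun z => (u₂ z) ^ 2)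
    (heig₁ : ∀ z, -(deriv (deriv u₁) z) - Φ z * u₁ z = μ₁ * u₁ z)
    (heig₂ : ∀ z, -(deriv (deriv u₂) z) - Φ z * u₂ z = μ₂ * u₂ z) :
    -(Z ^ 2) / 4 ≤ μ₂ := by
  by_contra! hμ₂
  have h₁ : IsBoundState Φ μ₁ u₁ := ⟨hsm₁, hL₁, heig₁⟩
  have h₂ : IsBoundState Φ μ₂ u₂ := ⟨hsm₂, hL₂, heig₂⟩
  obtain ⟨h₁0, hpos₁⟩ := h₁.apply_zero_ne_zero_and_mul_nonneg hZ hbound (hμ.trans hμ₂) hu₁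
  obtain ⟨h₂0, hpos₂⟩ := h₂.apply_zero_ne_zero_and_mul_nonneg hZ hbound hμ₂ hu₂
  refine hμ.ne ((h₁.const_mul (u₁ 0)).eq_of_nonneg (h₂.const_mul (u₂ 0)) hZ hbound hμ.le
    (hμ₂.trans_le (by nlinarith)) hpos₁ hpos₂ (x₀ := 0) ?_)
  exact mul_ne_zero (mul_ne_zero h₁0 h₁0) (mul_ne_zero h₂0 h₂0)

/-- let `h = −d²/dz² − Φ(z)` with `Φ` even and `Φ(z) ≤ Z/|z|`.
If `μ₁ < μ₂` are eigenvalues of `h` (with square-integrable smooth eigenfunctions),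
then the second lowest eigenvalue satisfies `μ₂ ≥ −Z²/4`. -/
theorem second_eigenvalue_lower_bound (Z : ℝ) (hZ : 0 < Z) (Φ : ℝ → ℝ)
    (heven : ∀ z, Φ (-z) = Φ z) (hbound : ∀ z : ℝ, z ≠ 0 → Φ z ≤ Z / |z|)
    (μ₁ μ₂ : ℝ) (hμ : μ₁ < μ₂) (u₁ u₂ : ℝ → ℝ)
    (hu₁ : u₁ ≠ 0) (hu₂ : u₂ ≠ 0)
    (hsm₁ : ContDiff ℝ 2 u₁) (hsm₂ : ContDiff ℝ 2 u₂)
    (hL₁ : Integrable fun z => (u₁ z) ^ 2) (hL₂ : Integrable fun z => (u₂ z) ^ 2)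
    (heig₁ : ∀ z, -(deriv (deriv u₁) z) - Φ z * u₁ z = μ₁ * u₁ z)
    (heig₂ : ∀ z, -(deriv (deriv u₂) z) - Φ z * u₂ z = μ₂ * u₂ z) :
    -(Z ^ 2) / 4 ≤ μ₂ :=
  second_eigenvalue_lower_bound_general Z hZ Φ hbound μ₁ μ₂ hμ u₁ u₂ hu₁ hu₂ hsm₁ hsm₂ hL₁ hL₂ heig₁
    heig₂
end
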